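/- For α ∈ (-1,1), the integral ∫₀^π x^{-α} cos(nx) dx is asymptotic to n^{α-1}·Γ(1-α)·cos(π(1-α)/2) as n → ∞, i.e., the ratio of the two sides tends to 1 (assuming the limit expression is nonzero, i.e., α ≠ 0). -/

import Mathlib

open Real Filter Set MeasureTheory intervalIntegral

lemma aux_meas (γ : ℝ) : Measurable (fun s : ℝ => s ^ γ / (1 + s ^ 2)) := by
  fun_prop

lemma integrableOn_rpow_div_one_add_sq {γ : ℝ} (h1 : -1 < γ) (h2 : γ < 1) :
    IntegrableOn (fun s : ℝ => s ^ γ / (1 + s ^ 2)) (Ioi 0) := by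
  have hpos : ∀ s : ℝ, (0:ℝ) < 1 + s ^ 2 := fun s => by positivity
  have h01 : IntegrableOn (fun s : ℝ => s ^ γ / (1 + s ^ 2)) (Ioc 0 1) := by
    have hr : IntegrableOn (fun s : ℝ => s ^ γ) (Ioc 0 1) :=
      (intervalIntegral.intervalIntegrable_rpow' h1 (a := 0) (b := 1)).1
    refine hr.mono' ((aux_meas γ).aestronglyMeasurable) ?_
    filter_upwards [ae_restrict_mem measurableSet_Ioc] with s hs
    rw [Real.norm_eq_abs, abs_div, abs_of_nonneg (Real.rpow_nonneg hs.1.le γ),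
      abs_of_pos (hpos s)]
    exact div_le_self (Real.rpow_nonneg hs.1.le γ) (by nlinarith [sq_nonneg s])
  have h1i : IntegrableOn (fun s : ℝ => s ^ γ / (1 + s ^ 2)) (Ioi 1) := by
    have hr : IntegrableOn (fun s : ℝ => s ^ (γ - 2)) (Ioi 1) :=
      integrableOn_Ioi_rpow_of_lt (by linarith) one_pos
    refine hr.mono' ((aux_meas γ).aestronglyMeasurable) ?_
    filter_upwards [ae_restrict_mem measurableSet_Ioi] with s hs
    have hs0 : (0:ℝ) < s := lt_trans one_pos hs
    rw [Real.norm_eq_abs, abs_div, abs_of_nonneg (Real.rpow_nonneg hs0.le γ),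
      abs_of_pos (hpos s)]
    rw [Real.rpow_sub hs0, div_le_div_iff₀ (hpos s) (by positivity)]
    have : s ^ (2:ℝ) = s ^ 2 := by
      rw [← Real.rpow_natCast s 2]; norm_num
    rw [this]
    have hγ : 0 ≤ s ^ γ := Real.rpow_nonneg hs0.le γ
    nlinarith [sq_nonneg s]
  have : Ioi (0:ℝ) = Ioc 0 1 ∪ Ioi 1 := (Set.Ioc_union_Ioi_eq_Ioi (by norm_num)).symm
  rw [this]
  exact h01.union h1i

lemma cos_half_pos {γ : ℝ} (h1 : -1 < γ) (h2 : γ < 1) : 0 < Real.cos (π * γ / 2) := by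
  apply Real.cos_pos_of_mem_Ioo
  constructor
  · nlinarith [Real.pi_pos]
  · nlinarith [Real.pi_pos]

lemma integral_rpow_div_one_add_sq {γ : ℝ} (h1 : -1 < γ) (h2 : γ < 1) :
    ∫ s in Ioi (0:ℝ), s ^ γ / (1 + s ^ 2) = π / (2 * Real.cos (π * γ / 2)) := by
  have hpos : ∀ s : ℝ, (0:ℝ) < 1 + s ^ 2 := fun s => by positivity
  set F : ℝ → ℝ → ℝ := fun s u => s ^ γ * (Real.exp (-u) * Real.exp (-(u * s ^ 2))) with hF
  have hFmeas : Measurable (Function.uncurry F) := by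
    unfold Function.uncurry
    fun_prop
  -- inner u-integral value
  have hinner : ∀ s : ℝ, 0 < s → ∫ u in Ioi (0:ℝ), F s u = s ^ γ / (1 + s ^ 2) := by
    intro s hs
    have h := Real.integral_rpow_mul_exp_neg_mul_Ioi (one_pos) (hpos s)
    simp only [Real.rpow_zero, sub_self, one_mul, Real.rpow_one, Real.Gamma_one, mul_one] at h
    calc ∫ u in Ioi (0:ℝ), F s u
        = ∫ u in Ioi (0:ℝ), s ^ γ * Real.exp (-((1 + s ^ 2) * u)) := by
          refine setIntegral_congr_fun measurableSet_Ioi (fun u hu => ?_)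
          simp only [hF, ← Real.exp_add]; ring_nf
      _ = s ^ γ * (1 / (1 + s ^ 2)) := by
          rw [MeasureTheory.integral_const_mul, h]
      _ = s ^ γ / (1 + s ^ 2) := by ring
  -- integrability on the product
  have hint : Integrable (Function.uncurry F)
      ((volume.restrict (Ioi 0)).prod (volume.restrict (Ioi 0))) := by
    rw [MeasureTheory.integrable_prod_iff hFmeas.aestronglyMeasurable]
    constructor
    · filter_upwards [ae_restrict_mem measurableSet_Ioi] with s hs
      have : IntegrableOn (fun u : ℝ => Real.exp (-((1 + s ^ 2) * u))) (Ioi 0) := by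
        have := exp_neg_integrableOn_Ioi 0 (hpos s)
        refine this.congr_fun (fun u _ => by ring_nf) measurableSet_Ioi
      refine (this.const_mul (s ^ γ)).congr (Filter.EventuallyEq.of_eq ?_)
      funext u
      simp only [hF, Function.uncurry, ← Real.exp_add]; ring_nf
    · have : ∀ᵐ s ∂(volume.restrict (Ioi (0:ℝ))),
          (∫ u in Ioi (0:ℝ), ‖F s u‖) = s ^ γ / (1 + s ^ 2) := by
        filter_upwards [ae_restrict_mem measurableSet_Ioi] with s hs
        rw [← hinner s hs]
        refine setIntegral_congr_fun measurableSet_Ioi (fun u hu => ?_)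
        rw [Real.norm_eq_abs, abs_of_nonneg]
        simp only [hF]
        exact mul_nonneg (Real.rpow_nonneg (le_of_lt hs) _) (by positivity)
      exact (integrableOn_rpow_div_one_add_sq h1 h2).congr (Filter.EventuallyEq.symm this)
  -- swap
  have hswap := MeasureTheory.integral_integral_swap hint
  have lhs_eq : ∫ s in Ioi (0:ℝ), s ^ γ / (1 + s ^ 2) = ∫ s in Ioi (0:ℝ), ∫ u in Ioi (0:ℝ), F s u := by
    refine setIntegral_congr_fun measurableSet_Ioi (fun s hs => ?_) |>.symm
    exact hinner s hs
  rw [lhs_eq, hswap]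
  -- inner s-integral value
  have hγ1 : (0:ℝ) < (γ + 1) / 2 := by linarith
  have hγ2 : (0:ℝ) < (1 - γ) / 2 := by linarith
  have hsint : ∀ u : ℝ, 0 < u →
      (∫ s in Ioi (0:ℝ), F s u) = Real.exp (-u) * ((1/2) * Real.Gamma ((γ+1)/2) * u ^ (-(γ+1)/2)) := by
    intro u hu
    have h := integral_rpow_mul_exp_neg_mul_rpow (p := 2) (q := γ) (b := u) two_pos h1 hu
    calc (∫ s in Ioi (0:ℝ), F s u)
        = Real.exp (-u) * ∫ s in Ioi (0:ℝ), s ^ γ * Real.exp (-u * s ^ (2:ℝ)) := by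
          rw [← MeasureTheory.integral_const_mul]
          refine setIntegral_congr_fun measurableSet_Ioi (fun s hs => ?_)
          rw [hF, Real.rpow_two]
          ring
      _ = Real.exp (-u) * ((1/2) * Real.Gamma ((γ+1)/2) * u ^ (-(γ+1)/2)) := by
          rw [h]; ring
  calc ∫ u in Ioi (0:ℝ), ∫ s in Ioi (0:ℝ), F s u
      = ∫ u in Ioi (0:ℝ), ((1/2) * Real.Gamma ((γ+1)/2)) * (Real.exp (-u) * u ^ ((1-γ)/2 - 1)) := by
        refine setIntegral_congr_fun measurableSet_Ioi (fun u hu => ?_)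
        rw [hsint u hu]
        have : ((1-γ)/2 - 1 : ℝ) = -(γ+1)/2 := by ring
        rw [this]; ring
    _ = ((1/2) * Real.Gamma ((γ+1)/2)) * Real.Gamma ((1-γ)/2) := by
        rw [MeasureTheory.integral_const_mul, ← Real.Gamma_eq_integral hγ2]
    _ = π / (2 * Real.cos (π * γ / 2)) := by
        have hrefl := Real.Gamma_mul_Gamma_one_sub ((1+γ)/2)
        have h1e : (1 : ℝ) - (1+γ)/2 = (1-γ)/2 := by ring
        rw [h1e] at hrefl
        have hsin : Real.sin (π * ((1+γ)/2)) = Real.cos (π * γ / 2) := by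
          have : π * ((1+γ)/2) = π/2 + π * γ / 2 := by ring
          rw [this, Real.sin_add, Real.sin_pi_div_two, Real.cos_pi_div_two]
          ring
        rw [hsin] at hrefl
        have : (γ+1)/2 = (1+γ)/2 := by ring
        rw [this, mul_assoc, hrefl]
        field_simp

lemma integral_exp_mul_cos (s M : ℝ) :
    ∫ t in (0:ℝ)..M, Real.exp (-(t*s)) * Real.cos t
      = (s + Real.exp (-(M*s)) * (Real.sin M - s * Real.cos M)) / (1 + s^2) := by
  have hpos : (0:ℝ) < 1 + s ^ 2 := by positivity
  have key : ∀ t : ℝ, HasDerivAt (fun t => (Real.exp (-(t*s)) * (Real.sin t - s * Real.cos t)) / (1+s^2))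
      (Real.exp (-(t*s)) * Real.cos t) t := by
    intro t
    have h1 : HasDerivAt (fun t : ℝ => -(t*s)) (-s) t := by
      simpa using ((hasDerivAt_id t).mul_const s).fun_neg
    have h2 : HasDerivAt (fun t : ℝ => Real.exp (-(t*s))) (Real.exp (-(t*s)) * (-s)) t := h1.exp
    have h3 : HasDerivAt (fun t : ℝ => Real.sin t - s * Real.cos t)
        (Real.cos t + s * Real.sin t) t := by
      simpa using (Real.hasDerivAt_sin t).fun_sub ((Real.hasDerivAt_cos t).const_mul s)
    have h4 := (h2.mul h3).div_const (1 + s^2)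
    refine h4.congr_deriv ?_
    rw [div_eq_iff hpos.ne']
    ring
  have := intervalIntegral.integral_eq_sub_of_hasDerivAt (f := fun t => (Real.exp (-(t*s)) * (Real.sin t - s * Real.cos t)) / (1+s^2)) (fun t _ => key t)
    (Continuous.intervalIntegrable (by fun_prop) 0 M)
  rw [this]
  simp only [zero_mul, neg_zero, Real.exp_zero, Real.sin_zero, Real.cos_zero, one_mul, mul_zero]
  field_simp
  ring

lemma integral_exp_mul_sin (s M : ℝ) :
    ∫ t in (0:ℝ)..M, Real.exp (-(t*s)) * Real.sin t
      = (1 + Real.exp (-(M*s)) * (-(s * Real.sin M) - Real.cos M)) / (1 + s^2) := by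
  have hpos : (0:ℝ) < 1 + s ^ 2 := by positivity
  have key : ∀ t : ℝ, HasDerivAt (fun t => (Real.exp (-(t*s)) * (-(s * Real.sin t) - Real.cos t)) / (1+s^2))
      (Real.exp (-(t*s)) * Real.sin t) t := by
    intro t
    have h1 : HasDerivAt (fun t : ℝ => -(t*s)) (-s) t := by
      simpa using ((hasDerivAt_id t).mul_const s).fun_neg
    have h2 : HasDerivAt (fun t : ℝ => Real.exp (-(t*s))) (Real.exp (-(t*s)) * (-s)) t := h1.exp
    have h3 : HasDerivAt (fun t : ℝ => -(s * Real.sin t) - Real.cos t)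
        (-(s * Real.cos t) + Real.sin t) t := by
      simpa using (((Real.hasDerivAt_sin t).const_mul s).fun_neg).fun_sub (Real.hasDerivAt_cos t)
    have h4 := (h2.mul h3).div_const (1 + s^2)
    refine h4.congr_deriv ?_
    rw [div_eq_iff hpos.ne']
    ring
  have := intervalIntegral.integral_eq_sub_of_hasDerivAt (f := fun t => (Real.exp (-(t*s)) * (-(s * Real.sin t) - Real.cos t)) / (1+s^2)) (fun t _ => key t)
    (Continuous.intervalIntegrable (by fun_prop) 0 M)
  rw [this]
  simp only [zero_mul, neg_zero, Real.exp_zero, Real.sin_zero, Real.cos_zero, one_mul, mul_zero]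
  field_simp
  ring

lemma mellin_exp_identity {β : ℝ} (hβ0 : 0 < β) (ht : 0 < (t:ℝ)) :
    (t:ℝ) ^ (-β) = (Real.Gamma β)⁻¹ * ∫ s in Ioi (0:ℝ), s ^ (β-1) * Real.exp (-(t*s)) := by
  have h := Real.integral_rpow_mul_exp_neg_mul_Ioi hβ0 ht
  rw [h, one_div, Real.inv_rpow ht.le, ← Real.rpow_neg ht.le]
  field_simp

lemma tendsto_aux {β : ℝ} (hβ0 : 0 < β) (hβ1 : β < 1) {f : ℝ → ℝ} (hf : Continuous f)
    (hfb : ∀ t, |f t| ≤ 1) (g : ℝ → ℝ) (e : ℝ → ℝ → ℝ)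
    (hinner : ∀ s : ℝ, 0 < s → ∀ M : ℝ,
      (∫ t in (0:ℝ)..M, Real.exp (-(t*s)) * f t) = g s + e M s)
    (hgint : IntegrableOn (fun s => s ^ (β-1) * g s) (Ioi 0))
    (hem : ∀ M : ℝ, Measurable (e M))
    (he : ∀ s : ℝ, 0 < s → ∀ M : ℝ, 0 ≤ M → |e M s| ≤ 2 * Real.exp (-(M*s))) :
    Tendsto (fun M : ℝ => ∫ t in (0:ℝ)..M, t ^ (-β) * f t) atTop
      (nhds ((Real.Gamma β)⁻¹ * ∫ s in Ioi (0:ℝ), s ^ (β-1) * g s)) := by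
  have hΓ : 0 < Real.Gamma β := Real.Gamma_pos_of_pos hβ0
  have hβ1' : (-1:ℝ) < β - 1 := by linarith
  -- base integrability in s, for t > 0
  have hbase : ∀ t : ℝ, 0 < t →
      IntegrableOn (fun s : ℝ => s ^ (β-1) * Real.exp (-(t*s))) (Ioi 0) := by
    intro t ht
    have := integrableOn_rpow_mul_exp_neg_mul_rpow hβ1' one_pos ht
    refine this.congr_fun (fun s hs => ?_) measurableSet_Ioi
    beta_reduce
    rw [Real.rpow_one, neg_mul]
  -- the product-integrable kernel, for each M ≥ 0
  have key : ∀ M : ℝ, 0 ≤ M →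
      (∫ t in (0:ℝ)..M, t ^ (-β) * f t)
        = (Real.Gamma β)⁻¹ * ∫ s in Ioi (0:ℝ), s ^ (β-1) * (g s + e M s) := by
    intro M hM
    set G : ℝ → ℝ → ℝ := fun t s => s ^ (β-1) * Real.exp (-(t*s)) * f t with hG
    have hGmeas : Measurable (Function.uncurry G) := by
      unfold Function.uncurry
      fun_prop
    have hGint : Integrable (Function.uncurry G)
        ((volume.restrict (Ioc 0 M)).prod (volume.restrict (Ioi 0))) := by
      rw [MeasureTheory.integrable_prod_iff hGmeas.aestronglyMeasurable]
      constructor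
      · filter_upwards [ae_restrict_mem measurableSet_Ioc] with t ht
        exact ((hbase t ht.1).mul_const (f t))
      · have hb : IntegrableOn (fun t : ℝ => Real.Gamma β * t ^ (-β)) (Ioc 0 M) := by
          refine Integrable.const_mul ?_ _
          exact (intervalIntegral.intervalIntegrable_rpow' (by linarith) (a := 0) (b := M)).1
        refine hb.mono' (hGmeas.aestronglyMeasurable.norm.integral_prod_right') ?_
        filter_upwards [ae_restrict_mem measurableSet_Ioc] with t ht
        have ht0 : 0 < t := ht.1
        rw [Real.norm_eq_abs, abs_of_nonneg (MeasureTheory.integral_nonneg (fun s => norm_nonneg _))]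
        have hle : (∫ s in Ioi (0:ℝ), ‖G t s‖)
            ≤ ∫ s in Ioi (0:ℝ), s ^ (β-1) * Real.exp (-(t*s)) := by
          refine MeasureTheory.integral_mono_of_nonneg
            (Filter.Eventually.of_forall (fun s => norm_nonneg _)) (hbase t ht0) ?_
          filter_upwards [ae_restrict_mem measurableSet_Ioi] with s hs
          have hs0 : 0 < s := hs
          rw [hG, Real.norm_eq_abs, abs_mul, abs_mul,
            abs_of_nonneg (Real.rpow_nonneg hs0.le _), Real.abs_exp]
          have h1 : s ^ (β-1) * Real.exp (-(t*s)) * |f t|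
              ≤ s ^ (β-1) * Real.exp (-(t*s)) * 1 := by
            refine mul_le_mul_of_nonneg_left (hfb t) (by positivity)
          simpa using h1
        refine hle.trans_eq ?_
        rw [Real.integral_rpow_mul_exp_neg_mul_Ioi hβ0 ht0, one_div,
          Real.inv_rpow ht0.le, ← Real.rpow_neg ht0.le, mul_comm]
    -- now compute
    have hswap := MeasureTheory.integral_integral_swap hGint
    calc (∫ t in (0:ℝ)..M, t ^ (-β) * f t)
        = ∫ t in Ioc (0:ℝ) M, t ^ (-β) * f t := by
          rw [intervalIntegral.integral_of_le hM]
      _ = ∫ t in Ioc (0:ℝ) M, (Real.Gamma β)⁻¹ * ∫ s in Ioi (0:ℝ), G t s := by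
          refine setIntegral_congr_fun measurableSet_Ioc (fun t ht => ?_)
          simp only [hG]
          rw [MeasureTheory.integral_mul_const, mellin_exp_identity hβ0 ht.1]
          ring
      _ = (Real.Gamma β)⁻¹ * ∫ t in Ioc (0:ℝ) M, ∫ s in Ioi (0:ℝ), G t s := by
          rw [MeasureTheory.integral_const_mul]
      _ = (Real.Gamma β)⁻¹ * ∫ s in Ioi (0:ℝ), ∫ t in Ioc (0:ℝ) M, G t s := by rw [hswap]
      _ = (Real.Gamma β)⁻¹ * ∫ s in Ioi (0:ℝ), s ^ (β-1) * (g s + e M s) := by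
          congr 1
          refine setIntegral_congr_fun measurableSet_Ioi (fun s hs => ?_)
          have hs0 : 0 < s := hs
          calc ∫ t in Ioc (0:ℝ) M, G t s
              = ∫ t in (0:ℝ)..M, s ^ (β-1) * (Real.exp (-(t*s)) * f t) := by
                rw [intervalIntegral.integral_of_le hM]
                refine setIntegral_congr_fun measurableSet_Ioc (fun t ht => ?_)
                rw [hG]; ring
            _ = s ^ (β-1) * (g s + e M s) := by
                rw [intervalIntegral.integral_const_mul, hinner s hs0 M]
  -- integrability of the error part for M > 0
  have heint : ∀ M : ℝ, 0 < M → IntegrableOn (fun s => s ^ (β-1) * e M s) (Ioi 0) := by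
    intro M hM
    refine ((hbase M hM).const_mul 2).mono' ?_ ?_
    · exact ((by fun_prop : Measurable (fun s : ℝ => s ^ (β-1))).mul (hem M)).aestronglyMeasurable
    · filter_upwards [ae_restrict_mem measurableSet_Ioi] with s hs
      have hs0 : 0 < s := hs
      rw [Real.norm_eq_abs, abs_mul, abs_of_nonneg (Real.rpow_nonneg hs0.le _)]
      calc s ^ (β-1) * |e M s| ≤ s ^ (β-1) * (2 * Real.exp (-(M*s))) :=
            mul_le_mul_of_nonneg_left (he s hs0 M hM.le) (Real.rpow_nonneg hs0.le _)
        _ = 2 * (s ^ (β-1) * Real.exp (-(M*s))) := by ring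
  set C := ∫ s in Ioi (0:ℝ), s ^ (β-1) * g s with hC
  set E : ℝ → ℝ := fun M => ∫ s in Ioi (0:ℝ), s ^ (β-1) * e M s with hE
  have hEbound : ∀ M : ℝ, 1 ≤ M → ‖E M‖ ≤ 2 * Real.Gamma β * M ^ (-β) := by
    intro M hM
    have hM0 : 0 < M := lt_of_lt_of_le one_pos hM
    have h1 : ‖E M‖ ≤ ∫ s in Ioi (0:ℝ), 2 * (s ^ (β-1) * Real.exp (-(M*s))) := by
      refine (MeasureTheory.norm_integral_le_integral_norm _).trans ?_
      refine MeasureTheory.integral_mono_of_nonneg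
        (Filter.Eventually.of_forall (fun s => norm_nonneg _)) ((hbase M hM0).const_mul 2) ?_
      filter_upwards [ae_restrict_mem measurableSet_Ioi] with s hs
      have hs0 : 0 < s := hs
      rw [Real.norm_eq_abs, abs_mul, abs_of_nonneg (Real.rpow_nonneg hs0.le _)]
      calc s ^ (β-1) * |e M s| ≤ s ^ (β-1) * (2 * Real.exp (-(M*s))) :=
            mul_le_mul_of_nonneg_left (he s hs0 M hM0.le) (Real.rpow_nonneg hs0.le _)
        _ = 2 * (s ^ (β-1) * Real.exp (-(M*s))) := by ring
    refine h1.trans_eq ?_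
    rw [MeasureTheory.integral_const_mul, Real.integral_rpow_mul_exp_neg_mul_Ioi hβ0 hM0,
      one_div, Real.inv_rpow hM0.le, ← Real.rpow_neg hM0.le]
    ring
  have hE0 : Tendsto E atTop (nhds 0) := by
    have hb : Tendsto (fun M : ℝ => 2 * Real.Gamma β * M ^ (-β)) atTop (nhds 0) := by
      have := (tendsto_rpow_neg_atTop hβ0).const_mul (2 * Real.Gamma β)
      simpa using this
    refine squeeze_zero_norm' ?_ hb
    filter_upwards [eventually_ge_atTop (1:ℝ)] with M hM
    exact hEbound M hM
  have hfinal : Tendsto (fun M : ℝ => (Real.Gamma β)⁻¹ * (C + E M)) atTop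
      (nhds ((Real.Gamma β)⁻¹ * C)) := by
    have := (tendsto_const_nhds (x := C) (f := atTop (α := ℝ))).add hE0
    have h2 := this.const_mul (Real.Gamma β)⁻¹
    simpa using h2
  refine Tendsto.congr' ?_ hfinal
  filter_upwards [eventually_ge_atTop (1:ℝ)] with M hM
  have hM0 : 0 < M := lt_of_lt_of_le one_pos hM
  rw [key M hM0.le]
  congr 1
  have hsplit : ∫ s in Ioi (0:ℝ), s ^ (β-1) * (g s + e M s)
      = ∫ s in Ioi (0:ℝ), (s ^ (β-1) * g s + s ^ (β-1) * e M s) := by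
    refine setIntegral_congr_fun measurableSet_Ioi (fun s hs => ?_)
    ring
  rw [hsplit, MeasureTheory.integral_add hgint (heint M hM0)]

lemma reflection_aux {β : ℝ} (hβ0 : 0 < β) (hβ1 : β < 1) :
    Real.Gamma β * Real.Gamma (1-β) * (2 * Real.sin (π * β / 2) * Real.cos (π * β / 2)) = π := by
  have hrefl := Real.Gamma_mul_Gamma_one_sub β
  have hsin2 : Real.sin (π * β) = 2 * Real.sin (π * β / 2) * Real.cos (π * β / 2) := by
    rw [show π * β = 2 * (π * β / 2) by ring, Real.sin_two_mul]; ring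
  have hsinpos : 0 < Real.sin (π * β) := by
    apply Real.sin_pos_of_pos_of_lt_pi
    · positivity
    · nlinarith [Real.pi_pos]
  rw [← hsin2, hrefl]
  field_simp

lemma cos_tendsto {β : ℝ} (hβ0 : 0 < β) (hβ1 : β < 1) :
    Tendsto (fun M : ℝ => ∫ t in (0:ℝ)..M, t ^ (-β) * Real.cos t) atTop
      (nhds (Real.Gamma (1-β) * Real.cos (π * (1-β)/2))) := by
  have h := tendsto_aux hβ0 hβ1 Real.continuous_cos (fun t => Real.abs_cos_le_one t)
    (fun s => s / (1 + s^2))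
    (fun M s => Real.exp (-(M*s)) * (Real.sin M - s * Real.cos M) / (1 + s^2))
    (fun s hs M => by rw [integral_exp_mul_cos s M]; ring)
    ?_ (fun M => by fun_prop) ?_
  · convert h using 2
    have hval : ∫ s in Ioi (0:ℝ), s ^ (β-1) * (s / (1 + s^2))
        = π / (2 * Real.cos (π * β / 2)) := by
      rw [← integral_rpow_div_one_add_sq (by linarith : (-1:ℝ) < β) hβ1]
      refine setIntegral_congr_fun measurableSet_Ioi (fun s hs => ?_)
      have hs0 : 0 < s := hs
      rw [show s ^ (β-1) * (s / (1 + s^2)) = s ^ (β-1) * s / (1 + s^2) by ring,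
        ← Real.rpow_add_one hs0.ne' (β-1), sub_add_cancel]
    rw [hval]
    have hc : Real.cos (π * (1-β)/2) = Real.sin (π * β / 2) := by
      rw [show π * (1-β)/2 = π/2 - π * β / 2 by ring, Real.cos_pi_div_two_sub]
    rw [hc]
    have hΓ : 0 < Real.Gamma β := Real.Gamma_pos_of_pos hβ0
    have hcpos : 0 < Real.cos (π * β / 2) := cos_half_pos (by linarith) hβ1
    have hP := reflection_aux hβ0 hβ1
    field_simp
    rw [mul_comm β π, eq_div_iff hcpos.ne']
    nlinarith [hP]
  · have h' := integrableOn_rpow_div_one_add_sq (by linarith : (-1:ℝ) < β) hβ1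
    refine h'.congr_fun (fun s hs => ?_) measurableSet_Ioi
    rw [show s ^ (β-1) * (s / (1 + s^2)) = s ^ (β-1) * s / (1 + s^2) by ring,
      ← Real.rpow_add_one (ne_of_gt hs) (β-1), sub_add_cancel]
  · intro s hs M hM
    have hpos : (0:ℝ) < 1 + s ^ 2 := by positivity
    rw [abs_div, abs_of_pos hpos, abs_mul, Real.abs_exp, div_le_iff₀ hpos]
    have h1 : |Real.sin M - s * Real.cos M| ≤ 1 + s := by
      calc |Real.sin M - s * Real.cos M| ≤ |Real.sin M| + |s * Real.cos M| := abs_sub _ _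
        _ ≤ 1 + s := by
          have := Real.abs_sin_le_one M
          have h2 : |s * Real.cos M| ≤ s := by
            rw [abs_mul, abs_of_pos hs]
            nlinarith [Real.abs_cos_le_one M, abs_nonneg (Real.cos M)]
          linarith
    have hexp : 0 ≤ Real.exp (-(M*s)) := (Real.exp_pos _).le
    have h3 : (1:ℝ) + s ≤ 2 * (1 + s^2) := by nlinarith [sq_nonneg (2*s - 1)]
    calc Real.exp (-(M*s)) * |Real.sin M - s * Real.cos M|
        ≤ Real.exp (-(M*s)) * (2 * (1 + s^2)) := by
          refine mul_le_mul_of_nonneg_left (h1.trans h3) hexp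
      _ = 2 * Real.exp (-(M*s)) * (1 + s^2) := by ring

lemma sin_tendsto {β : ℝ} (hβ0 : 0 < β) (hβ1 : β < 1) :
    Tendsto (fun M : ℝ => ∫ t in (0:ℝ)..M, t ^ (-β) * Real.sin t) atTop
      (nhds (Real.Gamma (1-β) * Real.sin (π * (1-β)/2))) := by
  have h := tendsto_aux hβ0 hβ1 Real.continuous_sin (fun t => Real.abs_sin_le_one t)
    (fun s => 1 / (1 + s^2))
    (fun M s => Real.exp (-(M*s)) * (-(s * Real.sin M) - Real.cos M) / (1 + s^2))
    (fun s hs M => by rw [integral_exp_mul_sin s M]; ring)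
    ?_ (fun M => by fun_prop) ?_
  · convert h using 2
    have hval : ∫ s in Ioi (0:ℝ), s ^ (β-1) * (1 / (1 + s^2))
        = π / (2 * Real.cos (π * (β-1) / 2)) := by
      rw [← integral_rpow_div_one_add_sq (by linarith : (-1:ℝ) < β-1) (by linarith)]
      refine setIntegral_congr_fun measurableSet_Ioi (fun s hs => ?_)
      ring
    rw [hval]
    have hc : Real.cos (π * (β-1)/2) = Real.sin (π * β / 2) := by
      rw [show π * (β-1)/2 = -(π/2 - π * β / 2) by ring, Real.cos_neg, Real.cos_pi_div_two_sub]
    have hs' : Real.sin (π * (1-β)/2) = Real.cos (π * β / 2) := by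
      rw [show π * (1-β)/2 = π/2 - π * β / 2 by ring, Real.sin_pi_div_two_sub]
    rw [hc, hs']
    have hΓ : 0 < Real.Gamma β := Real.Gamma_pos_of_pos hβ0
    have hspos : 0 < Real.sin (π * β / 2) := by
      apply Real.sin_pos_of_pos_of_lt_pi
      · positivity
      · nlinarith [Real.pi_pos]
    have hP := reflection_aux hβ0 hβ1
    field_simp
    rw [mul_comm β π, eq_div_iff hspos.ne']
    nlinarith [hP]
  · have h' := integrableOn_rpow_div_one_add_sq (by linarith : (-1:ℝ) < β-1) (by linarith)
    refine h'.congr_fun (fun s hs => ?_) measurableSet_Ioi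
    ring
  · intro s hs M hM
    have hpos : (0:ℝ) < 1 + s ^ 2 := by positivity
    rw [abs_div, abs_of_pos hpos, abs_mul, Real.abs_exp, div_le_iff₀ hpos]
    have h1 : |(-(s * Real.sin M) - Real.cos M)| ≤ 1 + s := by
      calc |(-(s * Real.sin M) - Real.cos M)| ≤ |(-(s * Real.sin M))| + |Real.cos M| := abs_sub _ _
        _ ≤ 1 + s := by
          have := Real.abs_cos_le_one M
          have h2 : |(-(s * Real.sin M))| ≤ s := by
            rw [abs_neg, abs_mul, abs_of_pos hs]
            nlinarith [Real.abs_sin_le_one M, abs_nonneg (Real.sin M)]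
          linarith
    have hexp : 0 ≤ Real.exp (-(M*s)) := (Real.exp_pos _).le
    have h3 : (1:ℝ) + s ≤ 2 * (1 + s^2) := by nlinarith [sq_nonneg (2*s - 1)]
    calc Real.exp (-(M*s)) * |(-(s * Real.sin M) - Real.cos M)|
        ≤ Real.exp (-(M*s)) * (2 * (1 + s^2)) := by
          refine mul_le_mul_of_nonneg_left (h1.trans h3) hexp
      _ = 2 * Real.exp (-(M*s)) * (1 + s^2) := by ring

lemma ibp_cos {δ : ℝ} (hδ0 : 0 < δ) (hδ1 : δ < 1) {M : ℝ} (hM : 0 < M) :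
    ∫ t in (0:ℝ)..M, t ^ δ * Real.cos t
      = M ^ δ * Real.sin M - δ * ∫ t in (0:ℝ)..M, t ^ (δ - 1) * Real.sin t := by
  have hδ1' : (-1:ℝ) < δ - 1 := by linarith
  have hint1 : IntervalIntegrable (fun t : ℝ => t ^ δ * Real.cos t) volume 0 M :=
    (intervalIntegral.intervalIntegrable_rpow' (by linarith : (-1:ℝ) < δ)).mul_continuousOn
      Real.continuous_cos.continuousOn
  have hint2 : IntervalIntegrable (fun t : ℝ => t ^ (δ-1) * Real.sin t) volume 0 M :=
    (intervalIntegral.intervalIntegrable_rpow' hδ1').mul_continuousOn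
      Real.continuous_sin.continuousOn
  have hsub : ∀ a : ℝ, 0 ≤ a → a ≤ M → Set.uIcc a M ⊆ Set.uIcc 0 M := by
    intro a ha haM
    apply Set.uIcc_subset_uIcc
    · rw [Set.uIcc_of_le hM.le]; exact ⟨ha, haM⟩
    · rw [Set.uIcc_of_le hM.le]; exact ⟨hM.le, le_rfl⟩
  have hsub0 : ∀ a : ℝ, 0 ≤ a → a ≤ M → Set.uIcc 0 a ⊆ Set.uIcc 0 M := by
    intro a ha haM
    apply Set.uIcc_subset_uIcc
    · rw [Set.uIcc_of_le hM.le]; exact ⟨le_rfl, hM.le⟩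
    · rw [Set.uIcc_of_le hM.le]; exact ⟨ha, haM⟩
  have hstep : ∀ a : ℝ, 0 < a → a ≤ M →
      ∫ t in a..M, t ^ δ * Real.cos t
        = M ^ δ * Real.sin M - a ^ δ * Real.sin a - δ * ∫ t in a..M, t ^ (δ-1) * Real.sin t := by
    intro a ha haM
    have hderiv : ∀ t ∈ Set.uIcc a M, HasDerivAt (fun t : ℝ => t ^ δ * Real.sin t)
        (δ * t ^ (δ-1) * Real.sin t + t ^ δ * Real.cos t) t := by
      intro t ht
      have ht0 : 0 < t := by
        rcases Set.mem_uIcc.1 ht with h | h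
        · exact lt_of_lt_of_le ha h.1
        · exact lt_of_lt_of_le hM h.1
      have h1 : HasDerivAt (fun t : ℝ => t ^ δ) (δ * t ^ (δ-1)) t :=
        Real.hasDerivAt_rpow_const (Or.inl ht0.ne')
      simpa [mul_comm, mul_assoc] using h1.fun_mul (Real.hasDerivAt_sin t)
    have h2' : IntervalIntegrable (fun t : ℝ => δ * t ^ (δ-1) * Real.sin t) volume a M := by
      have := (hint2.mono_set (hsub a ha.le haM)).const_mul δ
      simpa [mul_assoc] using this
    have h1' := hint1.mono_set (hsub a ha.le haM)
    have hftc := intervalIntegral.integral_eq_sub_of_hasDerivAt hderiv (h2'.add h1')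
    rw [intervalIntegral.integral_add h2' h1'] at hftc
    have hconst : ∫ t in a..M, δ * t ^ (δ-1) * Real.sin t
        = δ * ∫ t in a..M, t ^ (δ-1) * Real.sin t := by
      rw [← intervalIntegral.integral_const_mul]
      congr 1; funext t; ring
    rw [hconst] at hftc
    have : (fun t : ℝ => t ^ δ * Real.sin t) M - (fun t : ℝ => t ^ δ * Real.sin t) a
        = M ^ δ * Real.sin M - a ^ δ * Real.sin a := rfl
    rw [this] at hftc
    linarith [hftc]
  -- the residual function
  set c : ℝ := (∫ t in (0:ℝ)..M, t ^ δ * Real.cos t)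
    - (M ^ δ * Real.sin M - δ * ∫ t in (0:ℝ)..M, t ^ (δ - 1) * Real.sin t) with hc
  have hkey : ∀ a : ℝ, 0 < a → a ≤ M →
      c = (∫ t in (0:ℝ)..a, t ^ δ * Real.cos t)
        + δ * (∫ t in (0:ℝ)..a, t ^ (δ-1) * Real.sin t) - a ^ δ * Real.sin a := by
    intro a ha haM
    have e1 : (∫ t in (0:ℝ)..a, t ^ δ * Real.cos t) + ∫ t in a..M, t ^ δ * Real.cos t
        = ∫ t in (0:ℝ)..M, t ^ δ * Real.cos t :=
      intervalIntegral.integral_add_adjacent_intervals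
        (hint1.mono_set (hsub0 a ha.le haM)) (hint1.mono_set (hsub a ha.le haM))
    have e2 : (∫ t in (0:ℝ)..a, t ^ (δ-1) * Real.sin t) + ∫ t in a..M, t ^ (δ-1) * Real.sin t
        = ∫ t in (0:ℝ)..M, t ^ (δ-1) * Real.sin t :=
      intervalIntegral.integral_add_adjacent_intervals
        (hint2.mono_set (hsub0 a ha.le haM)) (hint2.mono_set (hsub a ha.le haM))
    have h3 := hstep a ha haM
    rw [hc, ← e1, ← e2]
    linarith [h3]
  -- show c = 0 by letting a → 0⁺
  have hc0 : c = 0 := by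
    have hmem : Set.Ioc (0:ℝ) (min 1 M) ∈ nhdsWithin (0:ℝ) (Set.Ioi 0) :=
      Ioc_mem_nhdsGT_of_mem ⟨le_rfl, lt_min one_pos hM⟩
    have hconst : Tendsto (fun _ : ℝ => c) (nhdsWithin (0:ℝ) (Set.Ioi 0)) (nhds c) :=
      tendsto_const_nhds
    have hzero : Tendsto (fun a : ℝ => (∫ t in (0:ℝ)..a, t ^ δ * Real.cos t)
        + δ * (∫ t in (0:ℝ)..a, t ^ (δ-1) * Real.sin t) - a ^ δ * Real.sin a)
        (nhdsWithin (0:ℝ) (Set.Ioi 0)) (nhds 0) := by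
      have hbnd : ∀ a ∈ Set.Ioc (0:ℝ) (min 1 M),
          ‖(∫ t in (0:ℝ)..a, t ^ δ * Real.cos t)
            + δ * (∫ t in (0:ℝ)..a, t ^ (δ-1) * Real.sin t) - a ^ δ * Real.sin a‖
          ≤ (2 + δ) * a := by
        intro a ha
        have ha0 : 0 < a := ha.1
        have ha1 : a ≤ 1 := le_trans ha.2 (min_le_left _ _)
        have hb1 : ‖∫ t in (0:ℝ)..a, t ^ δ * Real.cos t‖ ≤ 1 * |a - 0| := by
          refine intervalIntegral.norm_integral_le_of_norm_le_const (fun x hx => ?_)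
          rw [Set.uIoc_of_le ha0.le] at hx
          have hx0 : 0 < x := hx.1
          rw [Real.norm_eq_abs, abs_mul, abs_of_nonneg (Real.rpow_nonneg hx0.le _)]
          have h1 : x ^ δ ≤ 1 := by
            calc x ^ δ ≤ 1 ^ δ :=
                  Real.rpow_le_rpow hx0.le (le_trans hx.2 ha1) hδ0.le
              _ = 1 := Real.one_rpow δ
          nlinarith [Real.abs_cos_le_one x, abs_nonneg (Real.cos x), Real.rpow_nonneg hx0.le δ]
        have hb2 : ‖∫ t in (0:ℝ)..a, t ^ (δ-1) * Real.sin t‖ ≤ 1 * |a - 0| := by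
          refine intervalIntegral.norm_integral_le_of_norm_le_const (fun x hx => ?_)
          rw [Set.uIoc_of_le ha0.le] at hx
          have hx0 : 0 < x := hx.1
          rw [Real.norm_eq_abs, abs_mul, abs_of_nonneg (Real.rpow_nonneg hx0.le _)]
          have hsx : |Real.sin x| ≤ x := by
            have := Real.abs_sin_le_abs (x := x)
            rwa [abs_of_pos hx0] at this
          calc x ^ (δ-1) * |Real.sin x| ≤ x ^ (δ-1) * x :=
                mul_le_mul_of_nonneg_left hsx (Real.rpow_nonneg hx0.le _)
            _ = x ^ δ := by rw [← Real.rpow_add_one hx0.ne' (δ-1), sub_add_cancel]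
            _ ≤ 1 := by
                calc x ^ δ ≤ 1 ^ δ :=
                      Real.rpow_le_rpow hx0.le (le_trans hx.2 ha1) hδ0.le
                  _ = 1 := Real.one_rpow δ
        have hb3 : ‖a ^ δ * Real.sin a‖ ≤ a := by
          rw [Real.norm_eq_abs, abs_mul, abs_of_nonneg (Real.rpow_nonneg ha0.le _)]
          have h1 : a ^ δ ≤ 1 := by
            calc a ^ δ ≤ 1 ^ δ := Real.rpow_le_rpow ha0.le ha1 hδ0.le
              _ = 1 := Real.one_rpow δ
          have hsa : |Real.sin a| ≤ a := by
            have := Real.abs_sin_le_abs (x := a)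
            rwa [abs_of_pos ha0] at this
          nlinarith [abs_nonneg (Real.sin a), Real.rpow_nonneg ha0.le δ]
        rw [sub_zero, abs_of_pos ha0] at hb1 hb2
        calc ‖(∫ t in (0:ℝ)..a, t ^ δ * Real.cos t)
            + δ * (∫ t in (0:ℝ)..a, t ^ (δ-1) * Real.sin t) - a ^ δ * Real.sin a‖
            ≤ ‖(∫ t in (0:ℝ)..a, t ^ δ * Real.cos t)
              + δ * (∫ t in (0:ℝ)..a, t ^ (δ-1) * Real.sin t)‖ + ‖a ^ δ * Real.sin a‖ :=
              norm_sub_le _ _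
          _ ≤ ‖∫ t in (0:ℝ)..a, t ^ δ * Real.cos t‖
              + ‖δ * ∫ t in (0:ℝ)..a, t ^ (δ-1) * Real.sin t‖ + ‖a ^ δ * Real.sin a‖ := by
              have := norm_add_le (∫ t in (0:ℝ)..a, t ^ δ * Real.cos t)
                (δ * ∫ t in (0:ℝ)..a, t ^ (δ-1) * Real.sin t)
              linarith
          _ ≤ 1 * a + δ * (1 * a) + a := by
              have h4 : ‖δ * ∫ t in (0:ℝ)..a, t ^ (δ-1) * Real.sin t‖
                  = δ * ‖∫ t in (0:ℝ)..a, t ^ (δ-1) * Real.sin t‖ := by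
                rw [norm_mul, Real.norm_eq_abs δ, abs_of_pos hδ0]
              rw [h4]
              have h5 : δ * ‖∫ t in (0:ℝ)..a, t ^ (δ-1) * Real.sin t‖ ≤ δ * (1 * a) :=
                mul_le_mul_of_nonneg_left hb2 hδ0.le
              linarith
          _ = (2 + δ) * a := by ring
      have hb : Tendsto (fun a : ℝ => (2 + δ) * a) (nhdsWithin (0:ℝ) (Set.Ioi 0)) (nhds 0) := by
        have : Tendsto (fun a : ℝ => (2 + δ) * a) (nhds 0) (nhds ((2 + δ) * 0)) :=
          (continuous_const.mul continuous_id).tendsto 0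
        rw [mul_zero] at this
        exact this.mono_left nhdsWithin_le_nhds
      refine squeeze_zero_norm' ?_ hb
      filter_upwards [hmem] with a ha
      exact hbnd a ha
    have : Tendsto (fun _ : ℝ => c) (nhdsWithin (0:ℝ) (Set.Ioi 0)) (nhds 0) := by
      refine hzero.congr' ?_
      filter_upwards [hmem] with a ha
      exact (hkey a ha.1 (le_trans ha.2 (min_le_right _ _))).symm
    exact tendsto_nhds_unique hconst this
  rw [hc] at hc0
  linarith [hc0]

/-- For α ∈ (-1,1), α ≠ 0, ∫₀^π x^{-α} cos(nx) dx ∼ n^{α-1} Γ(1-α) cos(π(1-α)/2). -/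
theorem cos_integral_asymptotics (α : ℝ) (h1 : -1 < α) (h2 : α < 1) (h0 : α ≠ 0) :
    Tendsto (fun n : ℕ =>
        (∫ x in (0:ℝ)..π, x ^ (-α) * Real.cos (n * x)) /
          ((n:ℝ) ^ (α - 1) * Real.Gamma (1 - α) * Real.cos (π * (1 - α) / 2)))
      atTop (nhds 1) := by
  set K : ℝ := Real.Gamma (1 - α) * Real.cos (π * (1 - α) / 2) with hKdef
  have hΓpos : 0 < Real.Gamma (1 - α) := Real.Gamma_pos_of_pos (by linarith)
  have hcosne : Real.cos (π * (1 - α) / 2) ≠ 0 := by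
    intro hc
    rcases Real.cos_eq_zero_iff.1 hc with ⟨n, hn⟩
    have hπ : (0:ℝ) < π := Real.pi_pos
    have : (1 - α) = 2 * n + 1 := by
      have := hn
      field_simp at this
      nlinarith [this]
    have hn0 : (n:ℝ) = -α / 2 := by linarith
    have : -1 < -(α:ℝ)/2 ∧ -(α:ℝ)/2 < 1 := by constructor <;> nlinarith
    have hz : n = 0 := by
      have h1' : (-1:ℝ) < (n:ℝ) := by rw [hn0]; linarith [this.1]
      have h2' : (n:ℝ) < 1 := by rw [hn0]; linarith [this.2]
      exact_mod_cast (by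
        have := Int.lt_iff_add_one_le.mp (by exact_mod_cast h2' : n < 1)
        have := Int.lt_iff_add_one_le.mp (by exact_mod_cast h1' : -1 < n)
        omega : n = (0:ℤ))
    rw [hz] at hn0
    simp at hn0
    exact h0 (by linarith [hn0])
  have hK : K ≠ 0 := mul_ne_zero hΓpos.ne' hcosne
  have hMn : Tendsto (fun n : ℕ => (n:ℝ) * π) atTop atTop :=
    Tendsto.atTop_mul_const Real.pi_pos tendsto_natCast_atTop_atTop
  -- numerator limit
  have hnum : Tendsto (fun n : ℕ => ∫ t in (0:ℝ)..((n:ℝ)*π), t ^ (-α) * Real.cos t)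
      atTop (nhds K) := by
    rcases lt_or_gt_of_ne h0 with hneg | hpos
    · -- α < 0 : integration by parts
      set δ : ℝ := -α with hδdef
      have hδ0 : 0 < δ := by simp [hδdef]; linarith
      have hδ1 : δ < 1 := by simp [hδdef]; linarith
      set β : ℝ := 1 - δ with hβdef
      have hβ0 : 0 < β := by simp [hβdef]; linarith
      have hβ1 : β < 1 := by simp [hβdef]; linarith
      have hsin := (sin_tendsto hβ0 hβ1).comp hMn
      have hL : Real.Gamma (1 - β) * Real.sin (π * (1 - β)/2)
          = Real.Gamma δ * Real.sin (π * δ / 2) := by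
        rw [hβdef]; ring_nf
      have hKeq : K = -δ * (Real.Gamma δ * Real.sin (π * δ / 2)) := by
        rw [hKdef]
        have hΓ : Real.Gamma (1 - α) = δ * Real.Gamma δ := by
          rw [show (1:ℝ) - α = δ + 1 by rw [hδdef]; ring, Real.Gamma_add_one hδ0.ne']
        have hcs : Real.cos (π * (1 - α) / 2) = -Real.sin (π * δ / 2) := by
          rw [show π * (1 - α) / 2 = π/2 + π * δ / 2 by rw [hδdef]; ring,
            Real.cos_add, Real.cos_pi_div_two, Real.sin_pi_div_two]
          ring
        rw [hΓ, hcs]; ring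
      have hlim : Tendsto (fun n : ℕ =>
          -δ * ∫ t in (0:ℝ)..((n:ℝ)*π), t ^ (-β) * Real.sin t) atTop (nhds K) := by
        rw [hKeq, ← hL]
        exact hsin.const_mul (-δ)
      refine Tendsto.congr' ?_ hlim
      filter_upwards [eventually_ge_atTop 1] with n hn
      have hnpos : (0:ℝ) < (n:ℝ) * π := by
        have : (1:ℝ) ≤ (n:ℝ) := by exact_mod_cast hn
        nlinarith [Real.pi_pos]
      have hibp := ibp_cos hδ0 hδ1 hnpos
      have hsn : Real.sin ((n:ℝ)*π) = 0 := Real.sin_nat_mul_pi n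
      have hβδ : δ - 1 = -β := by rw [hβdef]; ring
      rw [hβδ] at hibp
      rw [hibp, hsn]
      ring
    · -- 0 < α
      exact (cos_tendsto hpos h2).comp hMn
  -- substitution identity for n ≥ 1
  have hsubst : ∀ n : ℕ, 1 ≤ n →
      (∫ x in (0:ℝ)..π, x ^ (-α) * Real.cos ((n:ℝ) * x))
        = (n:ℝ) ^ (α - 1) * ∫ t in (0:ℝ)..((n:ℝ)*π), t ^ (-α) * Real.cos t := by
    intro n hn
    have hn0 : (0:ℝ) < (n:ℝ) := by exact_mod_cast hn
    have hcomp := intervalIntegral.integral_comp_mul_left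
      (fun t : ℝ => t ^ (-α) * Real.cos t) (a := 0) (b := π) hn0.ne'
    have hcong : (∫ x in (0:ℝ)..π, x ^ (-α) * Real.cos ((n:ℝ) * x))
        = (n:ℝ) ^ α * ∫ x in (0:ℝ)..π, ((n:ℝ) * x) ^ (-α) * Real.cos ((n:ℝ) * x) := by
      rw [← intervalIntegral.integral_const_mul]
      refine intervalIntegral.integral_congr (fun x hx => ?_)
      rw [Set.uIcc_of_le Real.pi_pos.le] at hx
      rcases eq_or_lt_of_le hx.1 with h | h
      · rw [← h]
        simp [Real.zero_rpow (neg_ne_zero.mpr h0)]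
      · rw [Real.mul_rpow hn0.le h.le, ← mul_assoc, ← mul_assoc,
          ← Real.rpow_add hn0, add_neg_cancel, Real.rpow_zero, one_mul]
    rw [hcong, hcomp]
    rw [mul_zero, smul_eq_mul, ← mul_assoc]
    congr 1
    rw [Real.rpow_sub hn0, Real.rpow_one]
    ring
  -- conclude
  have hfin : Tendsto (fun n : ℕ =>
      (∫ t in (0:ℝ)..((n:ℝ)*π), t ^ (-α) * Real.cos t) / K) atTop (nhds 1) := by
    have := hnum.div_const K
    rwa [div_self hK] at this
  refine Tendsto.congr' ?_ hfin
  filter_upwards [eventually_ge_atTop 1] with n hn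
  have hn0 : (0:ℝ) < (n:ℝ) := by exact_mod_cast hn
  have hnr : ((n:ℝ) ^ (α - 1) : ℝ) ≠ 0 := (Real.rpow_pos_of_pos hn0 _).ne'
  rw [hsubst n hn, mul_assoc ((n:ℝ) ^ (α - 1)), ← hKdef, mul_div_mul_left _ _ hnr]
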